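/- Let V be a finite set with at least two elements and p : V → ℝ with p(k) > 0 for all k ∈ V and Σ_{k ∈ V} p(k) = 1. Let (U_k)_{k ∈ V} and (U'_k)_{k ∈ V} be two mutually independent families of independent standard Gumbel random variables. Then the probability that the (almost surely unique) index maximizing log p(k) + U_k equals the index maximizing log p(k) + U'_k is Σ_{k ∈ V} p(k)², which is strictly less than 1; in contrast, under shared noise the two argmaxes coincide with probability 1. -/

import Mathlib

open MeasureTheory ProbabilityTheory

/-- The standard Gumbel distribution on `ℝ`: the Borel probability measure with density
`x ↦ exp(−x − exp(−x))` with respect to Lebesgue measure. -/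
noncomputable def stdGumbel : Measure ℝ :=
  volume.withDensity fun x => ENNReal.ofReal (Real.exp (-x - Real.exp (-x)))

/-!
If `U` is standard Gumbel then `exp (-U)` is standard exponential; hence `P(U < a) = exp (-exp (-a))`
and `E[exp (-a exp (-U))] = 1 / (1 + a)`. Conditioning on `U j = t`, the index `j` beats every other
one with probability `∏_{k ≠ j} P(U k < t + θ j - θ k) = exp (-a exp (-t))`, where
`a = ∑_{k ≠ j} exp (θ k - θ j)`; integrating in `t`, the Gumbel-max index is `j` with probability
`exp (θ j) / ∑ k, exp (θ k)`, which is `p j` for `θ = log p`. The events "the argmax is `j`" are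
disjoint, so these probabilities add up to `1`, and for two independent noise vectors the events
"both argmaxes are `j`" have probability `p j ^ 2`.
-/

open Real Set
open scoped ENNReal

theorem setLIntegral_image_exp_neg {s : Set ℝ} (hs : MeasurableSet s) (g : ℝ → ℝ≥0∞) :
    ∫⁻ u in (fun x => exp (-x)) '' s, g u = ∫⁻ x in s, ENNReal.ofReal (exp (-x)) * g (exp (-x)) := by
  have hderiv : ∀ x ∈ s, HasDerivWithinAt (fun x => exp (-x)) (-exp (-x)) s x := fun x _ => by
    simpa using ((hasDerivAt_neg x).exp).hasDerivWithinAt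
  have hinj : InjOn (fun x : ℝ => exp (-x)) s := fun x _ y _ h => neg_injective (exp_injective h)
  simpa only [abs_neg, abs_of_pos (exp_pos _)] using
    lintegral_image_eq_lintegral_abs_deriv_mul hs hderiv hinj g

theorem image_exp_neg_Iio (a : ℝ) : (fun x => exp (-x)) '' Iio a = Ioi (exp (-a)) := by
  rw [← image_exp_Ioi, ← image_neg_Iio, image_image]

theorem image_exp_neg_univ : (fun x => exp (-x)) '' univ = Ioi 0 := by
  rw [image_univ, show (fun x : ℝ => exp (-x)) = exp ∘ Neg.neg from rfl,
    neg_surjective.range_comp, range_exp]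

theorem setLIntegral_Ioi_exp_neg_mul {c : ℝ} (hc : 0 < c) (b : ℝ) :
    ∫⁻ u in Ioi b, ENNReal.ofReal (exp (-(c * u))) = ENNReal.ofReal (exp (-(c * b)) / c) := by
  have hint : IntegrableOn (fun u => exp (-(c * u))) (Ioi b) := by
    simpa only [neg_mul] using exp_neg_integrableOn_Ioi b hc
  rw [← ofReal_integral_eq_lintegral_ofReal hint (.of_forall fun _ => (exp_pos _).le)]
  simp only [← neg_mul, integral_exp_mul_Ioi (neg_lt_zero.mpr hc), neg_div_neg_eq]

theorem setLIntegral_stdGumbel_comp_exp_neg {s : Set ℝ} (hs : MeasurableSet s) {g : ℝ → ℝ≥0∞}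
    (hg : Measurable g) :
    ∫⁻ t in s, g (exp (-t)) ∂stdGumbel
      = ∫⁻ u in (fun x => exp (-x)) '' s, ENNReal.ofReal (exp (-u)) * g u := by
  rw [setLIntegral_image_exp_neg hs, stdGumbel,
    setLIntegral_withDensity_eq_setLIntegral_mul _ (by fun_prop) (by fun_prop) hs]
  refine setLIntegral_congr_fun hs fun t _ => ?_
  rw [Pi.mul_apply, ← mul_assoc, ← ENNReal.ofReal_mul (exp_pos _).le, ← exp_add]
  ring_nf

theorem stdGumbel_Iio (a : ℝ) : stdGumbel (Iio a) = ENNReal.ofReal (exp (-exp (-a))) := by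
  calc stdGumbel (Iio a)
      = ∫⁻ t in Iio a, (fun _ => (1 : ℝ≥0∞)) (exp (-t)) ∂stdGumbel := (setLIntegral_one _).symm
    _ = ∫⁻ u in Ioi (exp (-a)), ENNReal.ofReal (exp (-(1 * u))) := by
        rw [setLIntegral_stdGumbel_comp_exp_neg measurableSet_Iio measurable_const,
          image_exp_neg_Iio]
        simp_rw [mul_one, one_mul]
    _ = ENNReal.ofReal (exp (-exp (-a))) := by
        rw [setLIntegral_Ioi_exp_neg_mul one_pos, one_mul, div_one]

theorem lintegral_stdGumbel_exp_neg_mul_exp_neg {a : ℝ} (ha : -1 < a) :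
    ∫⁻ t, ENNReal.ofReal (exp (-(a * exp (-t)))) ∂stdGumbel = ENNReal.ofReal (1 / (1 + a)) := by
  calc ∫⁻ t, ENNReal.ofReal (exp (-(a * exp (-t)))) ∂stdGumbel
      = ∫⁻ u in Ioi 0, ENNReal.ofReal (exp (-u)) * ENNReal.ofReal (exp (-(a * u))) := by
        rw [← image_exp_neg_univ, ← setLIntegral_stdGumbel_comp_exp_neg MeasurableSet.univ
          (by fun_prop), Measure.restrict_univ]
    _ = ∫⁻ u in Ioi 0, ENNReal.ofReal (exp (-((1 + a) * u))) := by
        refine lintegral_congr fun u => ?_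
        rw [← ENNReal.ofReal_mul (exp_pos _).le, ← exp_add]
        ring_nf
    _ = ENNReal.ofReal (1 / (1 + a)) := by
        rw [setLIntegral_Ioi_exp_neg_mul (by linarith), mul_zero, neg_zero, exp_zero]

instance : IsProbabilityMeasure stdGumbel where
  measure_univ := by
    simpa using lintegral_stdGumbel_exp_neg_mul_exp_neg (a := 0) (by norm_num)

theorem measure_pi_setOf_forall_ne_lt {V : Type*} [Fintype V] [DecidableEq V] (μ : Measure ℝ)
    [SigmaFinite μ] (j : V) {g : V → ℝ → ℝ} (hg : ∀ k, Measurable (g k)) :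
    Measure.pi (fun _ : V => μ) {x | ∀ k ≠ j, x k < g k (x j)}
      = ∫⁻ t, ∏ k ∈ Finset.univ.erase j, μ (Iio (g k t)) ∂μ := by
  set S := {x : V → ℝ | ∀ k ≠ j, x k < g k (x j)}
  have hS : MeasurableSet S := by
    simp only [S, ofPred_forall]
    exact .iInter fun k => .iInter fun _ => measurableSet_lt (by fun_prop) (by fun_prop)
  let e := MeasurableEquiv.piEquivPiSubtypeProd (fun _ : V => ℝ) (· = j)
  let _ : Unique {k // k = j} := ⟨⟨⟨j, rfl⟩⟩, fun k => Subtype.ext k.2⟩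
  have hslice (y : {k // k = j} → ℝ) : Prod.mk y ⁻¹' (e.symm ⁻¹' S)
      = univ.pi fun k : {k // k ≠ j} => Iio (g k (y default)) := by
    ext z
    simp only [MeasurableEquiv.piEquivPiSubtypeProd, Equiv.piEquivPiSubtypeProd, MeasurableEquiv.symm_mk,
      Equiv.symm_mk, MeasurableEquiv.coe_mk, Equiv.coe_fn_mk, preimage_ofPred_eq, mem_ofPred_eq,
      mem_pi, mem_univ, mem_Iio, forall_const, Subtype.forall, e, S]
    exact forall₂_congr fun k hk => by rw [dif_neg hk]; rfl
  rw [← (measurePreserving_piEquivPiSubtypeProd (fun _ => μ) (· = j)).symm.measure_preimage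
    hS.nullMeasurableSet, Measure.prod_apply (e.symm.measurable hS)]
  simp_rw [hslice, Measure.pi_pi]
  rw [← (measurePreserving_funUnique μ {k // k = j}).lintegral_comp_emb
    (MeasurableEquiv.measurableEmbedding _)]
  congr 1
  · -- the two `Fintype` instances on `{k // k = j}` differ
    congr
    exact Subsingleton.elim _ _
  · funext y
    rw [Finset.prod_subtype (Finset.univ.erase j) (p := (· ≠ j)) (by simp)]
    rfl

section StrictArgmax

variable {V : Type*}

def strictArgmaxSet (θ : V → ℝ) (j : V) : Set (V → ℝ) :=
  {x | ∀ k ≠ j, θ k + x k < θ j + x j}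

theorem measure_pi_stdGumbel_strictArgmaxSet [Fintype V] (θ : V → ℝ) (j : V) :
    Measure.pi (fun _ : V => stdGumbel) (strictArgmaxSet θ j)
      = ENNReal.ofReal (exp (θ j) / ∑ k, exp (θ k)) := by
  classical
  have hset : strictArgmaxSet θ j = {x | ∀ k ≠ j, x k < x j + (θ j - θ k)} := by
    ext x
    exact forall₂_congr fun k _ => by constructor <;> intro h <;> linarith
  set a := ∑ k ∈ Finset.univ.erase j, exp (θ k - θ j)
  have hprod (t : ℝ) : ∏ k ∈ Finset.univ.erase j, stdGumbel (Iio (t + (θ j - θ k)))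
      = ENNReal.ofReal (exp (-(a * exp (-t)))) := by
    simp_rw [stdGumbel_Iio]
    rw [← ENNReal.ofReal_prod_of_nonneg fun _ _ => (exp_pos _).le, ← exp_sum, Finset.sum_mul,
      ← Finset.sum_neg_distrib]
    congr 3 with k
    rw [← exp_add]
    ring_nf
  have ha : 1 + a = (∑ k, exp (θ k)) / exp (θ j) := by
    rw [Finset.sum_div, ← Finset.add_sum_erase _ _ (Finset.mem_univ j), div_self (exp_pos _).ne']
    simp_rw [a, exp_sub]
  have ha_nonneg : 0 ≤ a := Finset.sum_nonneg fun _ _ => (exp_pos _).le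
  rw [hset, measure_pi_setOf_forall_ne_lt _ j (g := fun k t => t + (θ j - θ k)) (by fun_prop)]
  simp_rw [hprod]
  rw [lintegral_stdGumbel_exp_neg_mul_exp_neg (by linarith), ha, one_div_div]

theorem measurableSet_strictArgmaxSet [Countable V] (θ : V → ℝ) (j : V) :
    MeasurableSet (strictArgmaxSet θ j) := by
  simp only [strictArgmaxSet, ofPred_forall]
  exact .iInter fun k => .iInter fun _ => measurableSet_lt (by fun_prop) (by fun_prop)

theorem pairwise_disjoint_strictArgmaxSet (θ : V → ℝ) :
    Pairwise (Function.onFun Disjoint (strictArgmaxSet θ)) := fun j j' hne =>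
  Set.disjoint_left.mpr fun _ hj hj' => lt_asymm (hj j' hne.symm) (hj' j hne)

theorem measure_pi_stdGumbel_iUnion_strictArgmaxSet [Fintype V] [Nonempty V] (θ : V → ℝ) :
    Measure.pi (fun _ : V => stdGumbel) (⋃ j, strictArgmaxSet θ j) = 1 := by
  rw [measure_iUnion (pairwise_disjoint_strictArgmaxSet θ) (measurableSet_strictArgmaxSet θ),
    tsum_fintype]
  simp_rw [measure_pi_stdGumbel_strictArgmaxSet]
  rw [← ENNReal.ofReal_sum_of_nonneg fun _ _ => by positivity, ← Finset.sum_div,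
    div_self (Finset.sum_pos (fun _ _ => exp_pos _) Finset.univ_nonempty).ne', ENNReal.ofReal_one]

end StrictArgmax

theorem map_pi_prod_eq_prod_of_iIndepFun_sumElim {ι Ω β : Type*} [Fintype ι] [MeasurableSpace Ω]
    [MeasurableSpace β] {P : Measure Ω} {μ : Measure β} [SigmaFinite μ] {f g : ι → Ω → β}
    (hf : ∀ i, Measurable (f i)) (hg : ∀ i, Measurable (g i)) (hindep : iIndepFun (Sum.elim f g) P)
    (hfμ : ∀ i, P.map (f i) = μ) (hgμ : ∀ i, P.map (g i) = μ) :
    P.map (fun ω => (fun i => f i ω, fun i => g i ω))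
      = (Measure.pi fun _ => μ).prod (Measure.pi fun _ => μ) := by
  have hW : ∀ i, Measurable (Sum.elim f g i) := by rintro (i | i); exacts [hf i, hg i]
  have hlaw : P.map (fun ω i => Sum.elim f g i ω) = Measure.pi fun _ => μ := by
    rw [hindep.map_fun_eq_pi_map fun i => (hW i).aemeasurable]
    refine congrArg Measure.pi (funext ?_)
    rintro (i | i)
    exacts [hfμ i, hgμ i]
  calc P.map (fun ω => (fun i => f i ω, fun i => g i ω))
      = (P.map fun ω i => Sum.elim f g i ω).map (MeasurableEquiv.sumPiEquivProdPi fun _ => β) := by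
        rw [Measure.map_map (MeasurableEquiv.measurable _) (measurable_pi_lambda _ hW)]
        rfl
    _ = (Measure.pi fun _ => μ).prod (Measure.pi fun _ => μ) := by
        rw [hlaw]
        exact (measurePreserving_sumPiEquivProdPi _).map_eq

theorem measure_prod_iUnion_prod_self {α ι : Type*} [MeasurableSpace α] [Countable ι]
    (μ : Measure α) [SFinite μ] {S : ι → Set α} (hS : ∀ j, MeasurableSet (S j))
    (hdisj : Pairwise (Function.onFun Disjoint S)) :
    (μ.prod μ) (⋃ j, S j ×ˢ S j) = ∑' j, μ (S j) ^ 2 := by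
  rw [measure_iUnion (fun j j' hne => (hdisj hne).set_prod_left _ _)
    fun j => (hS j).prod (hS j)]
  simp_rw [Measure.prod_prod, sq]

theorem sum_sq_lt_one_of_sum_eq_one {V : Type*} [Fintype V] (hV : 1 < Fintype.card V) {p : V → ℝ}
    (hp : ∀ k, 0 < p k) (hps : ∑ k, p k = 1) : ∑ k, p k ^ 2 < 1 := by
  have : Nonempty V := Fintype.card_pos_iff.mp (by omega)
  have hlt_one (k : V) : p k < 1 := by
    obtain ⟨k', hk'⟩ := Fintype.exists_ne_of_one_lt_card hV k
    rw [← hps]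
    exact Finset.single_lt_sum hk' (Finset.mem_univ _) (Finset.mem_univ _) (hp k')
      fun i _ _ => (hp i).le
  rw [← hps]
  exact Finset.sum_lt_sum_of_nonempty Finset.univ_nonempty fun k _ =>
    pow_lt_self_of_lt_one₀ (hp k) (hlt_one k) one_lt_two

theorem independent_copies_may_disagree_general
    {V : Type*} [Fintype V] (hV : 2 ≤ Fintype.card V)
    (p : V → ℝ) (hp : ∀ k, 0 < p k) (hps : ∑ k, p k = 1)
    {Ω : Type*} [MeasurableSpace Ω] (P : Measure Ω)
    (U U' : V → Ω → ℝ)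
    (hUm : ∀ k, Measurable (U k)) (hU'm : ∀ k, Measurable (U' k))
    -- the `2 |V|` variables `U_k, U'_k` are mutually independent
    (hindep : iIndepFun (Sum.elim U U') P)
    (hgumbel : ∀ k, P.map (U k) = stdGumbel) (hgumbel' : ∀ k, P.map (U' k) = stdGumbel) :
    P {ω | ∃ j, (∀ k ≠ j, Real.log (p k) + U k ω < Real.log (p j) + U j ω) ∧
          (∀ k ≠ j, Real.log (p k) + U' k ω < Real.log (p j) + U' j ω)} =
        ENNReal.ofReal (∑ k, (p k) ^ 2) ∧
      (∑ k, (p k) ^ 2) < 1 ∧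
      P {ω | ∃ j, ∀ k ≠ j, Real.log (p k) + U k ω < Real.log (p j) + U j ω} = 1 := by
  have : Nonempty V := Fintype.card_pos_iff.mp (by omega)
  set μ := Measure.pi fun _ : V => stdGumbel
  set S := strictArgmaxSet fun k => log (p k)
  have hS (j : V) : μ (S j) = ENNReal.ofReal (p j) := by
    simp [μ, S, measure_pi_stdGumbel_strictArgmaxSet, exp_log (hp _), hps]
  have hSm (j : V) : MeasurableSet (S j) := measurableSet_strictArgmaxSet _ j
  set X := fun ω => (fun k => U k ω, fun k => U' k ω)
  have hX : Measurable X := by fun_prop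
  have hlaw : P.map X = μ.prod μ :=
    map_pi_prod_eq_prod_of_iIndepFun_sumElim hUm hU'm hindep hgumbel hgumbel'
  refine ⟨?_, sum_sq_lt_one_of_sum_eq_one (by omega) hp hps, ?_⟩
  · convert_to P (X ⁻¹' ⋃ j, S j ×ˢ S j) = _ using 2
    · ext ω
      simp [X, S, strictArgmaxSet]
    rw [← Measure.map_apply hX (.iUnion fun j => (hSm j).prod (hSm j)), hlaw,
      measure_prod_iUnion_prod_self μ hSm (pairwise_disjoint_strictArgmaxSet _), tsum_fintype,
      ENNReal.ofReal_sum_of_nonneg fun k _ => sq_nonneg (p k)]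
    simp_rw [hS, ENNReal.ofReal_pow (hp _).le]
  · convert_to P (X ⁻¹' (⋃ j, S j) ×ˢ univ) = _ using 2
    · ext ω
      simp [X, S, strictArgmaxSet]
    rw [← Measure.map_apply hX ((MeasurableSet.iUnion hSm).prod .univ), hlaw, Measure.prod_prod,
      measure_univ, mul_one]
    exact measure_pi_stdGumbel_iUnion_strictArgmaxSet _

/-- Two identical copies of the same model, sampling via the Gumbel-max mechanism with
probability vector `p`, agree (i.e. their almost surely unique argmaxes coincide) with
probability `∑ k, (p k)²  < 1` under independent noise `U, U'`, whereas under shared noise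
the argmax exists almost surely (hence trivially both copies agree with probability 1). -/
theorem independent_copies_may_disagree
    {V : Type*} [Fintype V] (hV : 2 ≤ Fintype.card V)
    (p : V → ℝ) (hp : ∀ k, 0 < p k) (hps : ∑ k, p k = 1)
    {Ω : Type*} [MeasurableSpace Ω] (P : Measure Ω) [IsProbabilityMeasure P]
    (U U' : V → Ω → ℝ)
    (hUm : ∀ k, Measurable (U k)) (hU'm : ∀ k, Measurable (U' k))
    -- the `2 |V|` variables `U_k, U'_k` are mutually independent
    (hindep : iIndepFun (Sum.elim U U') P)
    (hgumbel : ∀ k, P.map (U k) = stdGumbel) (hgumbel' : ∀ k, P.map (U' k) = stdGumbel) :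
    P {ω | ∃ j, (∀ k ≠ j, Real.log (p k) + U k ω < Real.log (p j) + U j ω) ∧
          (∀ k ≠ j, Real.log (p k) + U' k ω < Real.log (p j) + U' j ω)} =
        ENNReal.ofReal (∑ k, (p k) ^ 2) ∧
      (∑ k, (p k) ^ 2) < 1 ∧
      P {ω | ∃ j, ∀ k ≠ j, Real.log (p k) + U k ω < Real.log (p j) + U j ω} = 1 :=
  independent_copies_may_disagree_general hV p hp hps P U U' hUm hU'm hindep hgumbel hgumbel'
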